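/- For every n ≥ 2 and every partition λ of n, dim_loc(λ) = max(1, s(λ), t(λ)), where s(λ) and t(λ) are the star and top capacities of λ. In particular, for every r ≥ 2, dim_loc(λ) ≥ r if and only if s(λ) ≥ r or t(λ) ≥ r. -/

import Mathlib

/-!  Common definitions: the partition graph `Gₙ`, local simplex dimension,
simplex layers, corners, transfers, capacities, and phase boundaries. -/

/-- Vertices of the partition graph: partitions of `n`, encoded as
Young diagrams with `n` cells. -/
abbrev PartitionVertex (n : ℕ) := {μ : YoungDiagram // μ.card = n}

/-- The partition graph `Gₙ`: two distinct partitions of `n` are adjacent iff the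
Young diagram of one is obtained from the other by removing one cell and adding one cell. -/
def partitionGraph (n : ℕ) : SimpleGraph (PartitionVertex n) where
  Adj μ ν := μ ≠ ν ∧ (μ.1.cells \ ν.1.cells).card = 1 ∧ (ν.1.cells \ μ.1.cells).card = 1
  symm := ⟨fun _ _ ⟨h, h1, h2⟩ => ⟨h.symm, h2, h1⟩⟩
  loopless := ⟨fun _ ⟨h, _⟩ => h rfl⟩

/-- `dimLoc n lam` : the largest `d` such that some clique of `Gₙ` of cardinality `d+1`
contains `lam`. -/
noncomputable def dimLoc (n : ℕ) (lam : PartitionVertex n) : ℕ :=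
  sSup {d : ℕ | ∃ s : Finset (PartitionVertex n),
    (partitionGraph n).IsClique (↑s : Set (PartitionVertex n)) ∧ s.card = d + 1 ∧ lam ∈ s}

/-- The simplex layer `L_r(n)`. -/
def layer (n r : ℕ) : Set (PartitionVertex n) := {lam | dimLoc n lam = r}

/-- The upper simplex layer `L_{≥ r}(n)`. -/
def layerGe (n r : ℕ) : Set (PartitionVertex n) := {lam | r ≤ dimLoc n lam}

/-- `Δ(n)` : the maximal local simplex dimension over all partitions of `n`. -/
noncomputable def Delta (n : ℕ) : ℕ := ⨆ lam : PartitionVertex n, dimLoc n lam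

/-- `c` is a removable corner of the Young diagram `μ`. -/
def Removable (μ : YoungDiagram) (c : ℕ × ℕ) : Prop :=
  c ∈ μ.cells ∧ IsLowerSet (↑(μ.cells.erase c) : Set (ℕ × ℕ))

/-- `a` is an addable corner of the Young diagram `μ`. -/
def Addable (μ : YoungDiagram) (a : ℕ × ℕ) : Prop :=
  a ∉ μ.cells ∧ IsLowerSet (↑(insert a μ.cells) : Set (ℕ × ℕ))

/-- The cells of `λ(c→a)`: remove the cell `c` and add the cell `a`. -/
def transferCells (μ : YoungDiagram) (c a : ℕ × ℕ) : Finset (ℕ × ℕ) :=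
  insert a (μ.cells.erase c)

/-- The transfer `λ(c→a)` is admissible: the result is again a Young diagram
and is different from `λ`. -/
def Admissible (μ : YoungDiagram) (c a : ℕ × ℕ) : Prop :=
  IsLowerSet (↑(transferCells μ c a) : Set (ℕ × ℕ)) ∧ transferCells μ c a ≠ μ.cells

/-- `A_max(λ,c)`: the addable corners `a` for which `λ(c→a)` is admissible. -/
def Amax (μ : YoungDiagram) (c : ℕ × ℕ) : Set (ℕ × ℕ) :=
  {a | Addable μ a ∧ Admissible μ c a}

/-- `C_max(λ,a)`: the removable corners `c` for which `λ(c→a)` is admissible. -/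
def Cmax (μ : YoungDiagram) (a : ℕ × ℕ) : Set (ℕ × ℕ) :=
  {c | Removable μ c ∧ Admissible μ c a}

/-- The full star-simplex `Σ^star_max(λ,c) = {λ} ∪ {λ(c→a) : a ∈ A_max(λ,c)}`,
as a set of vertices of `Gₙ`. -/
def starSimplex (n : ℕ) (lam : PartitionVertex n) (c : ℕ × ℕ) : Set (PartitionVertex n) :=
  {ν | ν = lam ∨ ∃ a ∈ Amax lam.1 c, ν.1.cells = transferCells lam.1 c a}

/-- The full top-simplex `Σ^top_max(λ,a) = {λ} ∪ {λ(c→a) : c ∈ C_max(λ,a)}`,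
as a set of vertices of `Gₙ`. -/
def topSimplex (n : ℕ) (lam : PartitionVertex n) (a : ℕ × ℕ) : Set (PartitionVertex n) :=
  {ν | ν = lam ∨ ∃ c ∈ Cmax lam.1 a, ν.1.cells = transferCells lam.1 c a}

/-- The star capacity `s(λ) = max over removable corners c of |A_max(λ,c)|`. -/
noncomputable def starCap (μ : YoungDiagram) : ℕ :=
  sSup {k | ∃ c : ℕ × ℕ, Removable μ c ∧ (Amax μ c).ncard = k}

/-- The top capacity `t(λ) = max over addable corners a of |C_max(λ,a)|`. -/
noncomputable def topCap (μ : YoungDiagram) : ℕ :=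
  sSup {k | ∃ a : ℕ × ℕ, Addable μ a ∧ (Cmax μ a).ncard = k}

/-!
A neighbour of `λ` in `Gₙ` is a transfer `λ(c→a)`, and two distinct neighbours are adjacent exactly
when they share the removed corner `c` or the added corner `a`. If any two of a family of pairs
agree in some coordinate, then all of them agree in the first coordinate or all of them in the
second, so the neighbours of `λ` inside a clique lie in a single star-simplex `Σ^star_max(λ,c)` or a
single top-simplex `Σ^top_max(λ,a)`; conversely these simplices are cliques. Hence `dim_loc(λ) =
max(s(λ), t(λ))`. For `n ≥ 2` a maximal cell can always be moved to the end of the first row or of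
the first column, so `s(λ) ≥ 1`.
-/

namespace Finset

variable {α : Type*} [DecidableEq α] {s t : Finset α} {a a' c c' : α}

theorem sdiff_insert_erase_of_mem (hc : c ∈ s) (ha : a ∉ s) :
    s \ insert a (s.erase c) = {c} := by
  ext x
  simp only [mem_sdiff, mem_insert, mem_erase, mem_singleton]
  grind

theorem insert_erase_sdiff_of_notMem (ha : a ∉ s) : insert a (s.erase c) \ s = {a} := by
  ext x
  simp only [mem_sdiff, mem_insert, mem_erase, mem_singleton]
  grind

theorem exists_eq_insert_erase_of_card_sdiff_eq_one (h₁ : (s \ t).card = 1)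
    (h₂ : (t \ s).card = 1) : ∃ c ∈ s, ∃ a ∉ s, t = insert a (s.erase c) := by
  obtain ⟨c, hc⟩ := card_eq_one.1 h₁
  obtain ⟨a, ha⟩ := card_eq_one.1 h₂
  simp only [Finset.ext_iff, mem_sdiff, mem_singleton] at hc ha
  refine ⟨c, ((hc c).2 rfl).1, a, ((ha a).2 rfl).2, ?_⟩
  ext x
  simp only [mem_insert, mem_erase]
  grind

theorem two_le_card_insert_erase_sdiff (hc' : c' ∈ s) (ha : a ∉ s) (ha' : a' ∉ s)
    (hcc : c ≠ c') (haa : a ≠ a') : 2 ≤ (insert a (s.erase c) \ insert a' (s.erase c')).card := by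
  have hsub : {a, c'} ⊆ insert a (s.erase c) \ insert a' (s.erase c') := by
    intro x
    simp only [mem_insert, mem_singleton, mem_sdiff, mem_erase]
    grind
  calc 2 = ({a, c'} : Finset α).card := (card_pair (by rintro rfl; exact ha hc')).symm
    _ ≤ _ := card_le_card hsub

theorem insert_erase_insert_erase (hc : c ∈ s) (hc' : c' ∈ s) (ha : a ∉ s) (hcc : c ≠ c') :
    insert c ((insert a (s.erase c)).erase c') = insert a (s.erase c') := by
  ext x
  simp only [mem_insert, mem_erase]
  grind

end Finset

theorem Set.Pairwise.forall_eq_or_forall_eq {ι α β : Type*} {s : Set ι} {f : ι → α}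
    {g : ι → β} (h : s.Pairwise fun i j => f i = f j ∨ g i = g j) :
    (∀ i ∈ s, ∀ j ∈ s, f i = f j) ∨ ∀ i ∈ s, ∀ j ∈ s, g i = g j := by
  refine or_iff_not_imp_left.2 fun hf => ?_
  push Not at hf
  obtain ⟨i, hi, j, hj, hij⟩ := hf
  have hg : ∀ k ∈ s, g k = g j := by
    intro k hk
    by_cases hki : f k = f i
    · exact (h hk hj (by rintro rfl; exact hij hki.symm)).resolve_left
        fun e => hij (hki.symm.trans e)
    · exact ((h hk hi (by rintro rfl; exact hki rfl)).resolve_left hki).trans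
        ((h hi hj (by rintro rfl; exact hij rfl)).resolve_left hij)
  exact fun k hk l hl => (hg k hk).trans (hg l hl).symm

section Corners

variable {μ ν : YoungDiagram} {c a : ℕ × ℕ}

theorem card_transferCells (hc : c ∈ μ.cells) (ha : a ∉ μ.cells) :
    (transferCells μ c a).card = μ.card := by
  rw [transferCells, Finset.card_insert_of_notMem fun h => ha (Finset.mem_of_mem_erase h),
    Finset.card_erase_add_one hc]

theorem addable_iff : Addable μ a ↔ a ∉ μ.cells ∧ ∀ q < a, q ∈ μ.cells := by
  refine and_congr_right fun ha => ⟨fun h q hq => ?_, fun h p q hqp hp => ?_⟩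
  · have hq' := h hq.le (Finset.mem_insert_self a μ.cells)
    exact (Finset.mem_insert.1 hq').resolve_left hq.ne
  · rcases Finset.mem_insert.1 hp with rfl | hp
    · rcases hqp.eq_or_lt with rfl | hlt
      · exact Finset.mem_insert_self _ _
      · exact Finset.mem_insert_of_mem (h q hlt)
    · exact Finset.mem_insert_of_mem (μ.isLowerSet hqp hp)

theorem Addable.le (h : Addable μ a) : a ≤ (μ.colLen 0, μ.rowLen 0) := by
  have hmem := (addable_iff.1 h).2
  constructor
  · by_contra! hlt
    have := hmem (μ.colLen 0, 0) (Prod.lt_of_lt_of_le hlt (Nat.zero_le _))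
    exact (YoungDiagram.mem_iff_lt_colLen.1 this).false
  · by_contra! hlt
    have := hmem (0, μ.rowLen 0) (Prod.lt_of_le_of_lt (Nat.zero_le _) hlt)
    exact (YoungDiagram.mem_iff_lt_rowLen.1 this).false

theorem addable_colLen_zero (μ : YoungDiagram) : Addable μ (μ.colLen 0, 0) := by
  refine addable_iff.2 ⟨fun h => (YoungDiagram.mem_iff_lt_colLen.1 h).false, ?_⟩
  rintro ⟨i, j⟩ hlt
  obtain rfl : j = 0 := Nat.le_zero.1 hlt.le.2
  exact YoungDiagram.mem_iff_lt_colLen.2 (Prod.mk_lt_mk_iff_left.1 hlt)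

theorem addable_rowLen_zero (μ : YoungDiagram) : Addable μ (0, μ.rowLen 0) := by
  refine addable_iff.2 ⟨fun h => (YoungDiagram.mem_iff_lt_rowLen.1 h).false, ?_⟩
  rintro ⟨i, j⟩ hlt
  obtain rfl : i = 0 := Nat.le_zero.1 hlt.le.1
  exact YoungDiagram.mem_iff_lt_rowLen.2 (Prod.mk_lt_mk_iff_right.1 hlt)

theorem removable_of_maximal (h : Maximal (· ∈ μ.cells) c) : Removable μ c := by
  refine ⟨h.1, fun p q hqp hp => ?_⟩
  rw [Finset.mem_coe, Finset.mem_erase] at hp ⊢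
  refine ⟨?_, μ.isLowerSet hqp hp.2⟩
  rintro rfl
  exact hp.1 (le_antisymm (h.2 hp.2 hqp) hqp)

theorem admissible_of_not_lt (hc : Removable μ c) (ha : Addable μ a) (h : ¬c < a) :
    Admissible μ c a := by
  refine ⟨fun p q hqp hp => ?_, fun he => ha.1 (he ▸ Finset.mem_insert_self _ _)⟩
  simp only [transferCells, Finset.coe_insert, Set.mem_insert_iff, Finset.mem_coe] at hp ⊢
  rcases hp with rfl | hp
  · rcases hqp.eq_or_lt with rfl | hlt
    · exact Or.inl rfl
    · exact Or.inr (Finset.mem_erase.2 ⟨by rintro rfl; exact h hlt, (addable_iff.1 ha).2 q hlt⟩)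
  · exact Or.inr (hc.2 hqp hp)

theorem exists_removable_mem_amax (h : 2 ≤ μ.card) : ∃ c a, Removable μ c ∧ a ∈ Amax μ c := by
  change 2 ≤ μ.cells.card at h
  obtain ⟨c, hc⟩ := μ.cells.exists_maximal (Finset.card_pos.1 (by omega))
  have hrem := removable_of_maximal hc
  have hc0 : c ≠ (0, 0) := by
    rintro rfl
    have hsub : μ.cells ⊆ {(0, 0)} := fun x hx =>
      have h0 : ((0, 0) : ℕ × ℕ) ≤ x := ⟨x.1.zero_le, x.2.zero_le⟩
      Finset.mem_singleton.2 (le_antisymm (hc.2 hx h0) h0)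
    have := Finset.card_le_card hsub
    simp only [Finset.card_singleton] at this
    omega
  by_cases hc1 : c.1 = 0
  · refine ⟨c, _, hrem, addable_colLen_zero μ,
      admissible_of_not_lt hrem (addable_colLen_zero μ) fun hlt => ?_⟩
    exact hc0 (Prod.ext hc1 (Nat.le_zero.1 hlt.le.2))
  · exact ⟨c, _, hrem, addable_rowLen_zero μ,
      admissible_of_not_lt hrem (addable_rowLen_zero μ) fun hlt => hc1 (Nat.le_zero.1 hlt.le.1)⟩

theorem removable_of_cells_eq_transferCells (hc : c ∈ μ.cells) (ha : a ∉ μ.cells)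
    (h : ν.cells = transferCells μ c a) : Removable μ c := by
  have he : μ.cells.erase c = μ.cells ∩ ν.cells := by
    ext x
    simp only [h, transferCells, Finset.mem_erase, Finset.mem_inter, Finset.mem_insert]
    grind
  refine ⟨hc, ?_⟩
  rw [he, Finset.coe_inter]
  exact μ.isLowerSet.inter ν.isLowerSet

theorem addable_of_cells_eq_transferCells (ha : a ∉ μ.cells)
    (h : ν.cells = transferCells μ c a) : Addable μ a := by
  have he : insert a μ.cells = μ.cells ∪ ν.cells := by
    ext x
    simp only [h, transferCells, Finset.mem_erase, Finset.mem_union, Finset.mem_insert]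
    grind
  refine ⟨ha, ?_⟩
  rw [he, Finset.coe_union]
  exact μ.isLowerSet.union ν.isLowerSet

theorem admissible_of_cells_eq_transferCells (ha : a ∉ μ.cells)
    (h : ν.cells = transferCells μ c a) : Admissible μ c a :=
  ⟨h ▸ ν.isLowerSet, fun he => ha (he ▸ Finset.mem_insert_self _ _)⟩

theorem finite_amax (μ : YoungDiagram) (c : ℕ × ℕ) : (Amax μ c).Finite :=
  (Set.finite_Iic _).subset fun _ ha => ha.1.le

theorem finite_cmax (μ : YoungDiagram) (a : ℕ × ℕ) : (Cmax μ a).Finite :=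
  μ.cells.finite_toSet.subset fun _ hc => hc.1.1

end Corners

section Capacities

variable {μ : YoungDiagram} {c a : ℕ × ℕ}

theorem bddAbove_ncard_amax (μ : YoungDiagram) :
    BddAbove {k | ∃ c, Removable μ c ∧ (Amax μ c).ncard = k} :=
  ((μ.cells.finite_toSet.image fun c => (Amax μ c).ncard).subset
    (by rintro _ ⟨c, hc, rfl⟩; exact ⟨c, hc.1, rfl⟩)).bddAbove

theorem bddAbove_ncard_cmax (μ : YoungDiagram) :
    BddAbove {k | ∃ a, Addable μ a ∧ (Cmax μ a).ncard = k} :=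
  ⟨μ.card, fun _ ⟨_, _, hk⟩ => hk ▸ (Set.ncard_le_ncard (fun _ hc => hc.1.1)
    μ.cells.finite_toSet).trans_eq (Set.ncard_coe_finset _)⟩

theorem ncard_amax_le_starCap (hc : Removable μ c) : (Amax μ c).ncard ≤ starCap μ :=
  le_csSup (bddAbove_ncard_amax μ) ⟨c, hc, rfl⟩

theorem ncard_cmax_le_topCap (ha : Addable μ a) : (Cmax μ a).ncard ≤ topCap μ :=
  le_csSup (bddAbove_ncard_cmax μ) ⟨a, ha, rfl⟩

theorem exists_ncard_amax_eq_starCap (h : starCap μ ≠ 0) :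
    ∃ c, Removable μ c ∧ (Amax μ c).ncard = starCap μ :=
  Nat.sSup_mem (Set.nonempty_iff_ne_empty.2 fun he => h (by rw [starCap, he, csSup_empty]; rfl))
    (bddAbove_ncard_amax μ)

theorem exists_ncard_cmax_eq_topCap (h : topCap μ ≠ 0) :
    ∃ a, Addable μ a ∧ (Cmax μ a).ncard = topCap μ :=
  Nat.sSup_mem (Set.nonempty_iff_ne_empty.2 fun he => h (by rw [topCap, he, csSup_empty]; rfl))
    (bddAbove_ncard_cmax μ)

theorem one_le_starCap (h : 2 ≤ μ.card) : 1 ≤ starCap μ := by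
  obtain ⟨c, a, hc, ha⟩ := exists_removable_mem_amax h
  exact ((Set.ncard_pos (finite_amax μ c)).2 ⟨a, ha⟩).trans_le (ncard_amax_le_starCap hc)

end Capacities

section Graph

variable {n : ℕ} {lam ν ν' : PartitionVertex n} {c c' a a' : ℕ × ℕ}

theorem PartitionVertex.ext (h : ν.1.cells = ν'.1.cells) : ν = ν' :=
  Subtype.ext (YoungDiagram.ext h)

theorem partitionGraph_adj_iff : (partitionGraph n).Adj ν ν' ↔
    ∃ c ∈ ν.1.cells, ∃ a ∉ ν.1.cells, ν'.1.cells = transferCells ν.1 c a := by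
  refine ⟨fun ⟨_, h₁, h₂⟩ => Finset.exists_eq_insert_erase_of_card_sdiff_eq_one h₁ h₂, ?_⟩
  rintro ⟨c, hc, a, ha, h⟩
  refine ⟨?_, ?_, ?_⟩
  · rintro rfl
    exact ha (h ▸ Finset.mem_insert_self _ _)
  · rw [h, transferCells, Finset.sdiff_insert_erase_of_mem hc ha, Finset.card_singleton]
  · rw [h, transferCells, Finset.insert_erase_sdiff_of_notMem ha, Finset.card_singleton]

theorem exists_cells_eq_transferCells (hc : c ∈ lam.1.cells) (ha : a ∉ lam.1.cells)
    (h : Admissible lam.1 c a) : ∃ ν : PartitionVertex n, ν.1.cells = transferCells lam.1 c a :=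
  ⟨⟨⟨_, h.1⟩, (card_transferCells hc ha).trans lam.2⟩, rfl⟩

theorem exists_mem_amax_of_adj (h : (partitionGraph n).Adj lam ν) :
    ∃ c a, Removable lam.1 c ∧ a ∈ Amax lam.1 c ∧ ν.1.cells = transferCells lam.1 c a := by
  obtain ⟨c, hc, a, ha, hν⟩ := partitionGraph_adj_iff.1 h
  exact ⟨c, a, removable_of_cells_eq_transferCells hc ha hν,
    ⟨addable_of_cells_eq_transferCells ha hν, admissible_of_cells_eq_transferCells ha hν⟩, hν⟩

theorem eq_or_eq_of_adj_transferCells (hc' : c' ∈ lam.1.cells) (ha : a ∉ lam.1.cells)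
    (ha' : a' ∉ lam.1.cells) (hν : ν.1.cells = transferCells lam.1 c a)
    (hν' : ν'.1.cells = transferCells lam.1 c' a') (h : (partitionGraph n).Adj ν ν') :
    c = c' ∨ a = a' := by
  by_contra! hne
  have := Finset.two_le_card_insert_erase_sdiff hc' ha ha' hne.1 hne.2
  rw [← transferCells, ← transferCells, ← hν, ← hν', h.2.1] at this
  omega

end Graph

section Simplices

variable {n : ℕ} (lam : PartitionVertex n) {c a : ℕ × ℕ}

theorem finite_setOf_cells_eq {β : Type*} {X : Set β} (hX : X.Finite)
    (F : β → Finset (ℕ × ℕ)) : {ν : PartitionVertex n | ∃ x ∈ X, ν.1.cells = F x}.Finite :=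
  Set.Finite.of_finite_image
    ((hX.image F).subset (by rintro _ ⟨ν, ⟨x, hx, h⟩, rfl⟩; exact ⟨x, hx, h.symm⟩))
    fun _ _ _ _ h => PartitionVertex.ext h

theorem ncard_setOf_cells_eq {β : Type*} {X : Set β} {F : β → Finset (ℕ × ℕ)}
    (hF : X.InjOn F) (hX : ∀ x ∈ X, ∃ ν : PartitionVertex n, ν.1.cells = F x) :
    {ν : PartitionVertex n | ∃ x ∈ X, ν.1.cells = F x}.ncard = X.ncard := by
  have hcells : (fun ν : PartitionVertex n => ν.1.cells) '' {ν | ∃ x ∈ X, ν.1.cells = F x} =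
      F '' X := by
    ext s
    constructor
    · rintro ⟨ν, ⟨x, hx, h⟩, rfl⟩
      exact ⟨x, hx, h.symm⟩
    · rintro ⟨x, hx, rfl⟩
      obtain ⟨ν, hν⟩ := hX x hx
      exact ⟨ν, ⟨x, hx, hν⟩, hν⟩
  rw [← Set.ncard_image_of_injective _ fun _ _ h => PartitionVertex.ext h, hcells,
    hF.ncard_image]

theorem starSimplex_eq_insert : starSimplex n lam c =
    insert lam {ν | ∃ a ∈ Amax lam.1 c, ν.1.cells = transferCells lam.1 c a} := rfl

theorem topSimplex_eq_insert : topSimplex n lam a =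
    insert lam {ν | ∃ c ∈ Cmax lam.1 a, ν.1.cells = transferCells lam.1 c a} := rfl

theorem isClique_starSimplex (hc : c ∈ lam.1.cells) :
    (partitionGraph n).IsClique (starSimplex n lam c) := by
  rw [starSimplex_eq_insert, SimpleGraph.isClique_insert]
  refine ⟨?_, fun ν ⟨a, ha, hν⟩ _ => partitionGraph_adj_iff.2 ⟨c, hc, a, ha.1.1, hν⟩⟩
  rintro ν ⟨a, ha, hν⟩ ν' ⟨a', ha', hν'⟩ hne
  have haa : a ≠ a' := by
    rintro rfl
    exact hne (PartitionVertex.ext (hν.trans hν'.symm))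
  have ha_erase : a ∉ lam.1.cells.erase c := fun h => ha.1.1 (Finset.mem_of_mem_erase h)
  refine partitionGraph_adj_iff.2 ⟨a, hν ▸ Finset.mem_insert_self _ _, a', ?_, ?_⟩
  · rw [hν, transferCells, Finset.mem_insert, not_or]
    exact ⟨haa.symm, fun h => ha'.1.1 (Finset.mem_of_mem_erase h)⟩
  · rw [hν', transferCells, transferCells, hν, transferCells, Finset.erase_insert ha_erase]

theorem isClique_topSimplex (ha : a ∉ lam.1.cells) :
    (partitionGraph n).IsClique (topSimplex n lam a) := by
  rw [topSimplex_eq_insert, SimpleGraph.isClique_insert]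
  refine ⟨?_, fun ν ⟨c, hc, hν⟩ _ => partitionGraph_adj_iff.2 ⟨c, hc.1.1, a, ha, hν⟩⟩
  rintro ν ⟨c, hc, hν⟩ ν' ⟨c', hc', hν'⟩ hne
  have hcc : c ≠ c' := by
    rintro rfl
    exact hne (PartitionVertex.ext (hν.trans hν'.symm))
  refine partitionGraph_adj_iff.2 ⟨c', ?_, c, ?_, ?_⟩
  · rw [hν, transferCells]
    exact Finset.mem_insert_of_mem (Finset.mem_erase.2 ⟨hcc.symm, hc'.1.1⟩)
  · rw [hν, transferCells, Finset.mem_insert, not_or]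
    exact ⟨fun h => ha (h ▸ hc.1.1), Finset.notMem_erase c _⟩
  · rw [hν', transferCells, transferCells, hν, transferCells,
      Finset.insert_erase_insert_erase hc.1.1 hc'.1.1 ha hcc]

theorem finite_starSimplex : (starSimplex n lam c).Finite :=
  (finite_setOf_cells_eq (finite_amax lam.1 c) _).insert lam

theorem finite_topSimplex : (topSimplex n lam a).Finite :=
  (finite_setOf_cells_eq (finite_cmax lam.1 a) _).insert lam

theorem ncard_starSimplex (hc : c ∈ lam.1.cells) :
    (starSimplex n lam c).ncard = (Amax lam.1 c).ncard + 1 := by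
  rw [starSimplex_eq_insert, Set.ncard_insert_of_notMem _
    (finite_setOf_cells_eq (finite_amax lam.1 c) _)]
  · refine congrArg (· + 1) (ncard_setOf_cells_eq (fun a ha a' ha' h => ?_)
      fun a ha => exists_cells_eq_transferCells hc ha.1.1 ha.2)
    have := Finset.insert_erase_sdiff_of_notMem (c := c) ha.1.1
    rwa [← transferCells, h, transferCells, Finset.insert_erase_sdiff_of_notMem ha'.1.1,
      Finset.singleton_inj, eq_comm] at this
  · rintro ⟨a, ha, h⟩
    exact ha.2.2 h.symm

theorem ncard_topSimplex (ha : a ∉ lam.1.cells) :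
    (topSimplex n lam a).ncard = (Cmax lam.1 a).ncard + 1 := by
  rw [topSimplex_eq_insert, Set.ncard_insert_of_notMem _
    (finite_setOf_cells_eq (finite_cmax lam.1 a) _)]
  · refine congrArg (· + 1) (ncard_setOf_cells_eq (fun c hc c' hc' h => ?_)
      fun c hc => exists_cells_eq_transferCells hc.1.1 ha hc.2)
    have := Finset.sdiff_insert_erase_of_mem hc.1.1 ha
    rwa [← transferCells, h, transferCells, Finset.sdiff_insert_erase_of_mem hc'.1.1 ha,
      Finset.singleton_inj, eq_comm] at this
  · rintro ⟨c, hc, h⟩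
    exact hc.2.2 h.symm

end Simplices

section LocalDimension

variable {n : ℕ} (lam : PartitionVertex n)

def cliqueDims : Set ℕ :=
  {d | ∃ s : Finset (PartitionVertex n),
    (partitionGraph n).IsClique (↑s : Set (PartitionVertex n)) ∧ s.card = d + 1 ∧ lam ∈ s}

theorem dimLoc_eq_sSup_cliqueDims : dimLoc n lam = sSup (cliqueDims lam) := rfl

variable {lam}

theorem mem_cliqueDims_of_isClique {S : Set (PartitionVertex n)} {d : ℕ}
    (hS : (partitionGraph n).IsClique S) (hfin : S.Finite) (hlam : lam ∈ S)
    (hcard : S.ncard = d + 1) : d ∈ cliqueDims lam :=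
  ⟨hfin.toFinset, by rwa [hfin.coe_toFinset], by rwa [← Set.ncard_eq_toFinset_card S hfin],
    hfin.mem_toFinset.2 hlam⟩

theorem zero_mem_cliqueDims : 0 ∈ cliqueDims lam :=
  mem_cliqueDims_of_isClique ((partitionGraph n).isClique_singleton lam) (Set.finite_singleton lam)
    rfl (Set.ncard_singleton lam)

theorem card_le_of_isClique {s : Finset (PartitionVertex n)}
    (hs : (partitionGraph n).IsClique (↑s : Set (PartitionVertex n))) (hlam : lam ∈ s) :
    s.card ≤ max (starCap lam.1) (topCap lam.1) + 1 := by
  classical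
  set t := s.erase lam
  rw [← Finset.card_erase_add_one hlam, Nat.add_le_add_iff_right]
  obtain ht | ⟨ν₀, hν₀⟩ := t.eq_empty_or_nonempty
  · simp [t, ht]
  have hnbr : ∀ ν ∈ t, ∃ c a, Removable lam.1 c ∧ a ∈ Amax lam.1 c ∧
      ν.1.cells = transferCells lam.1 c a := fun ν hν =>
    exists_mem_amax_of_adj (hs hlam (Finset.mem_of_mem_erase hν) (Finset.ne_of_mem_erase hν).symm)
  choose! C A hC hA hCA using hnbr
  have hinj : ∀ ν ∈ t, ∀ ν' ∈ t, C ν = C ν' → A ν = A ν' → ν = ν' := fun ν hν ν' hν' hc ha =>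
    PartitionVertex.ext (by rw [hCA ν hν, hCA ν' hν', hc, ha])
  have hpair : (t : Set (PartitionVertex n)).Pairwise fun ν ν' => C ν = C ν' ∨ A ν = A ν' :=
    fun ν hν ν' hν' hne => eq_or_eq_of_adj_transferCells (hC ν' hν').1 (hA ν hν).1.1
      (hA ν' hν').1.1 (hCA ν hν) (hCA ν' hν')
      (hs (Finset.mem_of_mem_erase hν) (Finset.mem_of_mem_erase hν') hne)
  rw [← Set.ncard_coe_finset]
  rcases hpair.forall_eq_or_forall_eq with hCeq | hAeq
  · calc (t : Set (PartitionVertex n)).ncard ≤ (Amax lam.1 (C ν₀)).ncard :=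
          Set.ncard_le_ncard_of_injOn A (fun ν hν => hCeq ν hν ν₀ hν₀ ▸ hA ν hν)
            (fun ν hν ν' hν' => hinj ν hν ν' hν' (hCeq ν hν ν' hν')) (finite_amax _ _)
      _ ≤ starCap lam.1 := ncard_amax_le_starCap (hC ν₀ hν₀)
      _ ≤ _ := le_max_left _ _
  · calc (t : Set (PartitionVertex n)).ncard ≤ (Cmax lam.1 (A ν₀)).ncard :=
          Set.ncard_le_ncard_of_injOn C (fun ν hν => ⟨hC ν hν, hAeq ν hν ν₀ hν₀ ▸ (hA ν hν).2⟩)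
            (fun ν hν ν' hν' hc => hinj ν hν ν' hν' hc (hAeq ν hν ν' hν')) (finite_cmax _ _)
      _ ≤ topCap lam.1 := ncard_cmax_le_topCap (hA ν₀ hν₀).1
      _ ≤ _ := le_max_right _ _

theorem starCap_mem_cliqueDims : starCap lam.1 ∈ cliqueDims lam := by
  obtain h | h := eq_or_ne (starCap lam.1) 0
  · exact h ▸ zero_mem_cliqueDims
  obtain ⟨c, hc, hcard⟩ := exists_ncard_amax_eq_starCap h
  exact mem_cliqueDims_of_isClique (isClique_starSimplex lam hc.1) (finite_starSimplex lam)
    (Or.inl rfl) (by rw [ncard_starSimplex lam hc.1, hcard])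

theorem topCap_mem_cliqueDims : topCap lam.1 ∈ cliqueDims lam := by
  obtain h | h := eq_or_ne (topCap lam.1) 0
  · exact h ▸ zero_mem_cliqueDims
  obtain ⟨a, ha, hcard⟩ := exists_ncard_cmax_eq_topCap h
  exact mem_cliqueDims_of_isClique (isClique_topSimplex lam ha.1) (finite_topSimplex lam)
    (Or.inl rfl) (by rw [ncard_topSimplex lam ha.1, hcard])

theorem isGreatest_cliqueDims :
    IsGreatest (cliqueDims lam) (max (starCap lam.1) (topCap lam.1)) := by
  refine ⟨?_, fun d ⟨s, hs, hcard, hlam⟩ => by have := card_le_of_isClique hs hlam; omega⟩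
  rcases le_total (topCap lam.1) (starCap lam.1) with h | h
  · exact (max_eq_left h).symm ▸ starCap_mem_cliqueDims
  · exact (max_eq_right h).symm ▸ topCap_mem_cliqueDims

theorem dimLoc_eq_max_starCap_topCap : dimLoc n lam = max (starCap lam.1) (topCap lam.1) :=
  (dimLoc_eq_sSup_cliqueDims lam).trans isGreatest_cliqueDims.csSup_eq

end LocalDimension

/-- For every `n ≥ 2` and every `λ ⊢ n`,
`dim_loc(λ) = max(1, s(λ), t(λ))`; in particular, for every `r ≥ 2`,
`dim_loc(λ) ≥ r` iff `s(λ) ≥ r` or `t(λ) ≥ r`. -/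
theorem dimLoc_eq_max_capacities (n : ℕ) (hn : 2 ≤ n) (lam : PartitionVertex n) :
    dimLoc n lam = max 1 (max (starCap lam.1) (topCap lam.1)) ∧
    ∀ r : ℕ, 2 ≤ r → (r ≤ dimLoc n lam ↔ r ≤ starCap lam.1 ∨ r ≤ topCap lam.1) := by
  have hdim := dimLoc_eq_max_starCap_topCap (lam := lam)
  have hstar : 1 ≤ starCap lam.1 := one_le_starCap (hn.trans_eq lam.2.symm)
  exact ⟨by omega, fun r _ => by rw [hdim, le_max_iff]⟩
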